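/- Let p be a prime and R an admissible ring. If y : ℕ → 𝕎 R satisfies frobenius (y (n+1)) = y n for all n, and every coefficient of y 0 is nilpotent, then y n = 0 for all n. -/
import Mathlib

open WittVector

/-- A `p`-nilpotent commutative ring `R` is admissible if `R_red := R ⧸ nilradical R` is a
perfect ring of characteristic `p` and the nilradical of `R/pR` is killed by a power of
Frobenius. -/
def IsAdmissible (p : ℕ) (R : Type*) [CommRing R] : Prop :=
  (∃ N : ℕ, (p : R) ^ N = 0) ∧
  CharP (R ⧸ nilradical R) p ∧
  Function.Bijective (fun a : R ⧸ nilradical R => a ^ p) ∧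
  ∃ m : ℕ, ∀ a ∈ nilradical (R ⧸ Ideal.span {(p : R)}), a ^ p ^ m = 0

section Aux

variable {R S : Type*} [CommRing R] [CommRing S]

/-- A ring hom commutes with `aeval` of an integral multivariate polynomial. -/
lemma ringHom_aeval_int (f : R →+* S) (g : ℕ → R) (φ : MvPolynomial ℕ ℤ) :
    f (MvPolynomial.aeval g φ) = MvPolynomial.aeval (fun i => f (g i)) φ := by
  rw [MvPolynomial.map_aeval, MvPolynomial.aeval_def, ← MvPolynomial.coe_eval₂Hom]
  exact MvPolynomial.eval₂Hom_congr (RingHom.ext_int _ _) rfl rfl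

/-- Evaluating an integral polynomial with zero constant coefficient at elements
divisible by `d` produces an element divisible by `d`. -/
lemma dvd_aeval_of_constantCoeff_eq_zero (d : R) (c : ℕ → R)
    (hc : ∀ i, d ∣ c i) (φ : MvPolynomial ℕ ℤ)
    (hφ : MvPolynomial.constantCoeff φ = 0) :
    d ∣ MvPolynomial.aeval c φ := by
  rw [← Ideal.mem_span_singleton, ← Ideal.Quotient.eq_zero_iff_mem,
    ringHom_aeval_int (Ideal.Quotient.mk _) c φ]
  have : (fun i => Ideal.Quotient.mk (Ideal.span {d}) (c i)) = fun _ => 0 := by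
    funext i
    exact Ideal.Quotient.eq_zero_iff_mem.2 (Ideal.mem_span_singleton.2 (hc i))
  rw [this, MvPolynomial.aeval_zero', hφ, map_zero]

variable (p : ℕ) [hp : Fact p.Prime]

lemma constantCoeff_frobeniusPoly (n : ℕ) :
    MvPolynomial.constantCoeff (WittVector.frobeniusPoly p n) = 0 := by
  have h : MvPolynomial.aeval (fun _ => (0 : ℤ)) (WittVector.frobeniusPoly p n) = 0 := by
    have h1 : (WittVector.frobenius (0 : WittVector p ℤ)).coeff n = 0 := by
      rw [map_zero, WittVector.zero_coeff]
    rw [WittVector.coeff_frobenius] at h1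
    have h2 : (0 : WittVector p ℤ).coeff = fun _ => (0 : ℤ) := by
      funext k; exact WittVector.zero_coeff p ℤ k
    rwa [h2] at h1
  rwa [MvPolynomial.aeval_zero', eq_intCast, Int.cast_id] at h

lemma constantCoeff_frobeniusPolyAux (n : ℕ) :
    MvPolynomial.constantCoeff (WittVector.frobeniusPolyAux p n) = 0 := by
  have h := constantCoeff_frobeniusPoly p n
  rw [WittVector.frobeniusPoly, map_add, map_mul, map_pow,
    MvPolynomial.constantCoeff_X, MvPolynomial.constantCoeff_C] at h
  have hp2 : (1 : ℕ) ≤ p := hp.out.one_lt.le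
  have : (0:ℤ) ^ p = 0 := zero_pow (by omega)
  rw [this, zero_add] at h
  have hpz : (p : ℤ) ≠ 0 := by exact_mod_cast hp.out.ne_zero
  exact (mul_eq_zero.1 h).resolve_left hpz

/-- The coefficients of `frobenius x` decompose as `x.coeff n ^ p + p * (aux)`. -/
lemma coeff_frobenius_decomp (x : WittVector p R) (n : ℕ) :
    (WittVector.frobenius x).coeff n =
      x.coeff n ^ p +
        (p : R) * MvPolynomial.aeval x.coeff (WittVector.frobeniusPolyAux p n) := by
  rw [WittVector.coeff_frobenius, WittVector.frobeniusPoly, map_add, map_mul, map_pow,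
    MvPolynomial.aeval_X, MvPolynomial.aeval_C]
  push_cast
  try ring

/-- `WittVector.map` commutes with `frobenius`. -/
lemma map_frobenius_comm (f : R →+* S) (x : WittVector p R) :
    WittVector.map f (WittVector.frobenius x) = WittVector.frobenius (WittVector.map f x) := by
  ext n
  rw [WittVector.map_coeff, WittVector.coeff_frobenius, WittVector.coeff_frobenius,
    ringHom_aeval_int]
  congr 1

end Aux

/-- If `R` is admissible, a Frobenius-compatible sequence in `𝕎 R` whose 0-th term has all
coefficients nilpotent vanishes identically. -/
theorem frobenius_compatible_nilpotent_eq_zero (p : ℕ) [Fact p.Prime]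
    (R : Type*) [CommRing R] (hR : IsAdmissible p R)
    (y : ℕ → WittVector p R)
    (hy : ∀ n, WittVector.frobenius (y (n + 1)) = y n)
    (h0 : ∀ i, IsNilpotent ((y 0).coeff i)) :
    ∀ n, y n = 0 := by
  obtain ⟨⟨N, hN⟩, hchar, _hperf, m, hm⟩ := hR
  have hp : p ≠ 0 := (Fact.out : p.Prime).ne_zero
  -- Step A: all coefficients of all `y n` are nilpotent.
  haveI : CharP (R ⧸ nilradical R) p := hchar
  haveI : IsReduced (R ⧸ nilradical R) :=
    (Ideal.isRadical_iff_quotient_reduced _).1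
      (Ideal.radical_isRadical (0 : Ideal R) : (nilradical R).IsRadical)
  have hnil : ∀ n i, IsNilpotent ((y n).coeff i) := by
    have hz : ∀ n, WittVector.map (Ideal.Quotient.mk (nilradical R)) (y n) = 0 := by
      intro n
      induction n with
      | zero =>
        ext i
        rw [WittVector.map_coeff, WittVector.zero_coeff, Ideal.Quotient.eq_zero_iff_mem]
        exact mem_nilradical.2 (h0 i)
      | succ n ih =>
        ext i
        have h1 : WittVector.frobenius
            (WittVector.map (Ideal.Quotient.mk (nilradical R)) (y (n + 1))) = 0 := by
          rw [← map_frobenius_comm, hy n, ih]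
        have h2 := congrArg (fun w => WittVector.coeff w i) h1
        simp only [WittVector.coeff_frobenius_charP, WittVector.zero_coeff] at h2
        rw [WittVector.zero_coeff]
        exact IsReduced.eq_zero _ ⟨p, h2⟩
    intro n i
    have := congrArg (fun w => WittVector.coeff w i) (hz n)
    simp only [WittVector.map_coeff, WittVector.zero_coeff] at this
    exact mem_nilradical.1 (Ideal.Quotient.eq_zero_iff_mem.1 this)
  -- iterated frobenius
  have hiter : ∀ k n, WittVector.frobenius^[k] (y (n + k)) = y n := by
    intro k
    induction k with
    | zero => intro n; simp
    | succ k ih =>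
      intro n
      have : n + (k + 1) = (n + 1) + k := by ring
      rw [this, Function.iterate_succ_apply', ih (n + 1), hy n]
  -- Step B base: every coefficient is divisible by `p`.
  have hbase : ∀ n i, (p : R) ∣ (y n).coeff i := by
    intro n i
    set P := Ideal.span {(p : R)} with hP
    set q : R →+* R ⧸ P := Ideal.Quotient.mk P with hq
    have hcong : ∀ (x : WittVector p R) (j : ℕ),
        q ((WittVector.frobenius x).coeff j) = q (x.coeff j) ^ p := by
      intro x j
      rw [coeff_frobenius_decomp, map_add, map_mul, map_pow]
      have : q (p : R) = 0 := Ideal.Quotient.eq_zero_iff_mem.2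
        (Ideal.subset_span (Set.mem_singleton _))
      rw [this, zero_mul, add_zero]
    have hpow : ∀ (k : ℕ) (x : WittVector p R) (j : ℕ),
        q ((WittVector.frobenius^[k] x).coeff j) = q (x.coeff j) ^ p ^ k := by
      intro k
      induction k with
      | zero => intro x j; simp
      | succ k ih =>
        intro x j
        rw [Function.iterate_succ_apply, ih, hcong, ← pow_mul, pow_succ']
    have hkey : q ((y n).coeff i) = q ((y (n + m)).coeff i) ^ p ^ m := by
      rw [← hiter m n, hpow]
    have hnilq : q ((y (n + m)).coeff i) ∈ nilradical (R ⧸ Ideal.span {(p : R)}) :=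
      mem_nilradical.2 ((hnil (n + m) i).map q)
    rw [← Ideal.mem_span_singleton, ← Ideal.Quotient.eq_zero_iff_mem, hkey, hm _ hnilq]
  -- Step C: induction, every coefficient is divisible by `p ^ (j + 1)`.
  have hind : ∀ j n i, (p : R) ^ (j + 1) ∣ (y n).coeff i := by
    intro j
    induction j with
    | zero => intro n i; simpa using hbase n i
    | succ j ih =>
      intro n i
      rw [← hy n, coeff_frobenius_decomp]
      apply dvd_add
      · obtain ⟨c, hc⟩ := ih (n + 1) i
        rw [hc, mul_pow, ← pow_mul]
        exact Dvd.dvd.mul_right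
          (pow_dvd_pow _ (by nlinarith [(Fact.out : p.Prime).two_le])) _
      · have : (p : R) ^ (j + 2) = (p : R) * (p : R) ^ (j + 1) := by ring
        rw [this]
        exact mul_dvd_mul_left _ (dvd_aeval_of_constantCoeff_eq_zero _ _
          (fun k => ih (n + 1) k) _ (constantCoeff_frobeniusPolyAux p i))
  -- conclude
  intro n
  ext i
  rw [WittVector.zero_coeff]
  have h1 := hind N n i
  have h2 : (p : R) ^ (N + 1) = 0 := by rw [pow_succ, hN, zero_mul]
  rw [h2, zero_dvd_iff] at h1
  exact h1
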